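/- An infinite word w over {P,S} is root-active if and only if w is the concatenation w₁w₂w₃⋯ of infinitely many finite zero-words, i.e. finite words wᵢ with sum(wᵢ) = 0. -/
import Mathlib


/-!
Infinitary rewriting for the weakly orthogonal string rewrite system
over the alphabet `{P, S}` with rules `PS → ε` and `SP → ε`.
-/

namespace PS

/-- The two letters of the alphabet. -/
inductive Letter : Type
  | P : Letter
  | S : Letter
  deriving DecidableEq

open Letter

/-- Finite words over `{P, S}`. -/
abbrev Word : Type := List Letter

/-- Infinite words over `{P, S}`. -/
abbrev IWord : Type := ℕ → Letter

/-- One rewrite step on finite words: delete an adjacent factor `PS` or `SP`. -/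
def FStep (w w' : Word) : Prop :=
  ∃ u v : Word, (w = u ++ [P, S] ++ v ∨ w = u ++ [S, P] ++ v) ∧ w' = u ++ v

/-- The value of a letter: `S` counts `+1` and `P` counts `-1`. -/
def lval : Letter → ℤ
  | S => 1
  | P => -1

/-- `sum(w)` for a finite word `w`: number of `S`'s minus number of `P`'s. -/
def fsum (w : Word) : ℤ := (w.map lval).sum

/-- `sum(w, n)`: the number of `S`'s minus the number of `P`'s among the
first `n` letters of the infinite word `w`. -/
def isum (w : IWord) (n : ℕ) : ℤ := ∑ i ∈ Finset.range n, lval (w i)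

/-- A rewrite step at depth `d` on infinite words: the letters at
positions `d`, `d+1` form `PS` or `SP` and are deleted. -/
def IStepAt (d : ℕ) (w w' : IWord) : Prop :=
  ((w d = P ∧ w (d + 1) = S) ∨ (w d = S ∧ w (d + 1) = P)) ∧
    ∀ i, w' i = if i < d then w i else w (i + 2)

/-- `IRed w u` (written `w ↠∞ u`): there is a strongly convergent infinitary
reduction from `w` with limit `u`.  By compression, reductions of length at
most `ω` suffice; such a reduction is a sequence of rewrite steps (with idle
steps allowed, to accommodate finite reductions) whose depths tend to
infinity and whose terms converge to `u`. -/
def IRed (w u : IWord) : Prop :=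
  ∃ (t : ℕ → IWord) (d : ℕ → Option ℕ),
    t 0 = w ∧
    (∀ n, (d n).elim (t (n + 1) = t n) (fun k => IStepAt k (t n) (t (n + 1)))) ∧
    (∀ m : ℕ, ∃ N, ∀ n ≥ N, ∀ k, d n = some k → m ≤ k) ∧
    (∀ m : ℕ, ∃ N, ∀ n ≥ N, ∀ i ≤ m, t n i = u i)

/-- The constant infinite word `S^ω`. -/
def Somega : IWord := fun _ => S

/-- The constant infinite word `P^ω`. -/
def Pomega : IWord := fun _ => P

/-- The `S`-norm `‖w‖_S = sup_n sum(w, n)` (as an extended real). -/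
noncomputable def Snorm (w : IWord) : EReal := ⨆ n : ℕ, ((isum w n : ℝ) : EReal)

/-- The `P`-norm `‖w‖_P = sup_n (− sum(w, n))` (as an extended real). -/
noncomputable def Pnorm (w : IWord) : EReal := ⨆ n : ℕ, ((-(isum w n) : ℝ) : EReal)

/-- An infinite word is a normal form if it admits no rewrite step. -/
def NormalForm (w : IWord) : Prop := ∀ (d : ℕ) (w' : IWord), ¬ IStepAt d w w'

/-- Infinitary conversion: the equivalence generated by `↠∞`. -/
inductive Conv : IWord → IWord → Prop
  | rel {w u : IWord} : IRed w u → Conv w u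
  | refl (w : IWord) : Conv w w
  | symm {w u : IWord} : Conv w u → Conv u w
  | trans {w u v : IWord} : Conv w u → Conv u v → Conv w v

end PS

namespace PS

/-- `w` is root-active: there is a (by compression, length-`ω`) strongly
continuous reduction sequence starting at `w` with infinitely many rewrite
steps at depth `0` (the root). -/
def RootActive (w : IWord) : Prop :=
  ∃ (t : ℕ → IWord) (d : ℕ → ℕ),
    t 0 = w ∧ (∀ n, IStepAt (d n) (t n) (t (n + 1))) ∧
    ∀ N : ℕ, ∃ n ≥ N, d n = 0

/-! ### Auxiliary lemmas -/

open Letter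

lemma lval_pair {a b : Letter} (h : a ≠ b) : lval a + lval b = 0 := by
  cases a <;> cases b <;> simp_all [lval]

lemma mul_lval_ne {m : ℕ} (hm : m ≠ 0) (x : Letter) : (m : ℤ) * lval x ≠ 0 := by
  cases x <;> simp [lval] <;> exact_mod_cast hm

lemma isum_const {u : IWord} {m : ℕ} (hc : ∀ i < m, u i = u 0) :
    isum u m = (m : ℤ) * lval (u 0) := by
  unfold isum
  rw [Finset.sum_congr rfl (fun i hi => by rw [hc i (Finset.mem_range.mp hi)])]
  simp [mul_comm]

lemma isum_succ (u : IWord) (m : ℕ) : isum u (m + 1) = isum u m + lval (u m) := by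
  unfold isum; rw [Finset.sum_range_succ]

lemma isum_stepAt_le {k : ℕ} {u u' : IWord} (h : IStepAt k u u') {m : ℕ} (hm : m ≤ k) :
    isum u' m = isum u m := by
  unfold isum
  refine Finset.sum_congr rfl fun i hi => ?_
  rw [h.2 i, if_pos (by have := Finset.mem_range.mp hi; omega)]

lemma stepAt_pair_sum {k : ℕ} {u u' : IWord} (h : IStepAt k u u') :
    lval (u k) + lval (u (k + 1)) = 0 := by
  rcases h.1 with ⟨h1, h2⟩ | ⟨h1, h2⟩ <;> simp [h1, h2, lval]

lemma isum_stepAt_ge {k : ℕ} {u u' : IWord} (h : IStepAt k u u') :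
    ∀ m, k ≤ m → isum u' m = isum u (m + 2) := by
  intro m hm
  induction m, hm using Nat.le_induction with
  | base =>
    rw [isum_stepAt_le h le_rfl, show k + 2 = (k + 1) + 1 from rfl,
      isum_succ, isum_succ]
    have := stepAt_pair_sum h
    omega
  | succ m hm ih =>
    have hm' : u' m = u (m + 2) := by rw [h.2 m, if_neg (by omega)]
    have e1 : isum u' (m + 1) = isum u' m + lval (u' m) := isum_succ u' m
    have e2 : isum u (m + 2 + 1) = isum u (m + 2) + lval (u (m + 2)) :=
      isum_succ u (m + 2)
    rw [show m + 1 + 2 = m + 2 + 1 from rfl, e1, e2, ih, hm']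

/-- Deleting the two letters at positions `k`, `k+1`. -/
def delAt (k : ℕ) (u : IWord) : IWord := fun i => if i < k then u i else u (i + 2)

lemma stepAt_delAt {k : ℕ} {u : IWord} (h : u k ≠ u (k + 1)) :
    IStepAt k u (delAt k u) := by
  refine ⟨?_, fun i => rfl⟩
  cases h1 : u k <;> cases h2 : u (k + 1) <;> simp_all

/-- The state carried along the constructed reduction: the current word together
with cut points at which all partial sums vanish. -/
structure GState where
  u : IWord
  b : ℕ → ℕ
  mono : StrictMono b
  z0 : b 0 = 0
  zero : ∀ j, isum u (b j) = 0

namespace GState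

variable (s : GState)

lemma b1_pos' : 0 < s.b 1 := by
  have h := s.mono (show (0:ℕ) < 1 by norm_num)
  rw [s.z0] at h; exact h

lemma exNe : ∃ i, s.u i ≠ s.u (i + 1) := by
  by_contra h
  push_neg at h
  have hc : ∀ i, s.u i = s.u 0 := by
    intro i; induction i with
    | zero => rfl
    | succ i ih => rw [← h i, ih]
  have h1 := s.zero 1
  rw [isum_const (fun i _ => hc i)] at h1
  exact mul_lval_ne (by have := s.b1_pos'; omega) (s.u 0) h1

/-- The depth of the next step: the least position with two distinct adjacent letters. -/
def kk : ℕ := Nat.find s.exNe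

lemma k_ne : s.u s.kk ≠ s.u (s.kk + 1) := Nat.find_spec s.exNe

lemma k_const : ∀ i ≤ s.kk, s.u i = s.u 0 := by
  intro i hi
  induction i with
  | zero => rfl
  | succ i ih =>
    have h1 : s.u i = s.u (i + 1) := by
      have hk : i < Nat.find s.exNe := by
        have : i < s.kk := by omega
        exact this
      exact of_not_not (Nat.find_min s.exNe hk)
    rw [← h1, ih (by omega)]

lemma isum_k_ne : s.kk ≠ 0 → isum s.u s.kk ≠ 0 := by
  intro h
  rw [isum_const (fun i hi => s.k_const i (by omega))]
  exact mul_lval_ne h _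

lemma b1_ge : s.kk + 2 ≤ s.b 1 := by
  by_contra h
  push_neg at h
  have hc : isum s.u (s.b 1) = (s.b 1 : ℤ) * lval (s.u 0) :=
    isum_const (fun i hi => s.k_const i (by omega))
  have := s.zero 1
  rw [hc] at this
  exact mul_lval_ne (by have := s.b1_pos'; omega) _ this

lemma isum_k2 : isum s.u (s.kk + 2) = isum s.u s.kk := by
  rw [show s.kk + 2 = (s.kk + 1) + 1 from rfl, isum_succ, isum_succ]
  have := lval_pair s.k_ne
  omega

lemma b1_ne : s.kk ≠ 0 → s.b 1 ≠ s.kk + 2 := by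
  intro h hb
  have h1 := s.zero 1
  rw [hb, s.isum_k2] at h1
  exact s.isum_k_ne h h1

lemma step_next : IStepAt s.kk s.u (delAt s.kk s.u) := stepAt_delAt s.k_ne

/-- The successor state. -/
def next : GState := by
  refine
    { u := delAt s.kk s.u
      b := if s.b 1 = s.kk + 2 then fun j => s.b (j + 1) - 2
           else fun j => if j = 0 then 0 else s.b j - 2
      mono := ?_, z0 := ?_, zero := ?_ }
  · -- StrictMono
    split_ifs with hC
    · intro j j' hj
      show s.b (j + 1) - 2 < s.b (j' + 1) - 2
      have h1 : s.b 1 ≤ s.b (j + 1) := s.mono.monotone (by omega)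
      have h2 := s.mono (show j + 1 < j' + 1 by omega)
      omega
    · intro j j' hj
      show (if j = 0 then 0 else s.b j - 2) < (if j' = 0 then 0 else s.b j' - 2)
      have hge : s.kk + 3 ≤ s.b 1 := by
        rcases Nat.eq_zero_or_pos s.kk with h | h
        · have := s.b1_ge; omega
        · have := s.b1_ne (by omega); have := s.b1_ge; omega
      rcases Nat.eq_zero_or_pos j with rfl | hjpos
      · have h1 : s.b 1 ≤ s.b j' := s.mono.monotone (by omega)
        rw [if_pos rfl, if_neg (by omega : ¬ j' = 0)]
        omega
      · have h1 : s.b 1 ≤ s.b j := s.mono.monotone (by omega)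
        have h2 := s.mono hj
        rw [if_neg (by omega : ¬ j = 0), if_neg (by omega : ¬ j' = 0)]
        omega
  · -- b' 0 = 0
    split_ifs with hC
    · -- k = 0 here since otherwise b 1 ≠ k + 2
      rcases Nat.eq_zero_or_pos s.kk with h | h
      · show s.b 1 - 2 = 0
        omega
      · exact absurd hC (s.b1_ne (by omega))
    · rfl
  · -- zero sums
    intro j
    split_ifs with hC
    · have hk0 : s.kk = 0 := by
        rcases Nat.eq_zero_or_pos s.kk with h | h
        · exact h
        · exact absurd hC (s.b1_ne (by omega))
      have hb : 2 ≤ s.b (j + 1) := by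
        have := s.mono.monotone (show 1 ≤ j + 1 by omega); omega
      show isum (delAt s.kk s.u) (s.b (j + 1) - 2) = 0
      rw [isum_stepAt_ge s.step_next _ (by omega),
        show s.b (j + 1) - 2 + 2 = s.b (j + 1) by omega]
      exact s.zero (j + 1)
    · have hge : s.kk + 3 ≤ s.b 1 := by
        rcases Nat.eq_zero_or_pos s.kk with h | h
        · have := s.b1_ge; omega
        · have := s.b1_ne (by omega); have := s.b1_ge; omega
      rcases Nat.eq_zero_or_pos j with rfl | hjpos
      · simp [isum]
      · have h1 : s.b 1 ≤ s.b j := s.mono.monotone (by omega)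
        show isum (delAt s.kk s.u) (if j = 0 then 0 else s.b j - 2) = 0
        rw [if_neg (by omega : ¬ j = 0),
          isum_stepAt_ge s.step_next _ (by omega),
          show s.b j - 2 + 2 = s.b j by omega]
        exact s.zero j

lemma next_u : (s.next).u = delAt s.kk s.u := rfl

lemma next_b1 (h : s.kk ≠ 0) : (s.next).b 1 = s.b 1 - 2 ∧ 3 ≤ s.b 1 := by
  have hne := s.b1_ne h
  have hge := s.b1_ge
  constructor
  · show (if s.b 1 = s.kk + 2 then fun j => s.b (j + 1) - 2
      else fun j => if j = 0 then 0 else s.b j - 2) 1 = s.b 1 - 2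
    rw [if_neg hne]
    simp
  · omega

end GState

/-! ### Auxiliary development for the forward direction -/

/-- The position in the original word corresponding to position `m`
after `n` rewrite steps with depths given by `d`. -/
def Gfun (d : ℕ → ℕ) : ℕ → ℕ → ℕ
  | 0, m => m
  | n + 1, m => Gfun d n (if m ≤ d n then m else m + 2)

lemma Gfun_strictMono (d : ℕ → ℕ) (n : ℕ) : StrictMono (Gfun d n) := by
  induction n with
  | zero => exact strictMono_id
  | succ n ih =>
    intro a b hab
    simp only [Gfun]
    apply ih
    split_ifs <;> omega

lemma Gfun_zero (d : ℕ → ℕ) (n : ℕ) : Gfun d n 0 = 0 := by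
  induction n with
  | zero => rfl
  | succ n ih => simpa [Gfun] using ih

lemma Gfun_mono_n (d : ℕ → ℕ) (m : ℕ) : Monotone (fun n => Gfun d n m) := by
  apply monotone_nat_of_le_succ
  intro n
  show Gfun d n m ≤ Gfun d n (if m ≤ d n then m else m + 2)
  exact (Gfun_strictMono d n).monotone (by split_ifs <;> omega)

lemma Gfun_root (d : ℕ → ℕ) (n : ℕ) (h : d n = 0) :
    Gfun d n 2 < Gfun d (n + 1) 2 := by
  show Gfun d n 2 < Gfun d n (if 2 ≤ d n then 2 else 4)
  rw [if_neg (by omega)]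
  exact Gfun_strictMono d n (by omega)

lemma Gfun_two_pos (d : ℕ → ℕ) (n : ℕ) : 0 < Gfun d n 2 := by
  have := Gfun_strictMono d n (show 0 < 2 by norm_num)
  rw [Gfun_zero] at this
  exact this

/-- An infinite word `w` over `{P, S}` is root-active if and
only if `w` is the concatenation `w₁w₂w₃⋯` of infinitely many finite
zero-words (finite words `wᵢ` with `sum(wᵢ) = 0`), i.e. iff there is a strictly
increasing sequence of cut points starting at `0` at which all partial sums
vanish. -/
theorem rootActive_iff_concat_zero_words (w : IWord) :
    RootActive w ↔
      ∃ b : ℕ → ℕ, StrictMono b ∧ b 0 = 0 ∧ ∀ j : ℕ, isum w (b j) = 0 := by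
  constructor
  · -- root-active → zero-word decomposition
    rintro ⟨t, d, ht0, hstep, hroot⟩
    -- partial sums of `t n` are partial sums of `w` at positions `Gfun d n m`
    have hisum : ∀ n m, isum (t n) m = isum w (Gfun d n m) := by
      intro n
      induction n with
      | zero => intro m; rw [ht0]; rfl
      | succ n ih =>
        intro m
        have hs := hstep n
        by_cases hm : m ≤ d n
        · have hG : Gfun d (n + 1) m = Gfun d n m := by
            show Gfun d n (if m ≤ d n then m else m + 2) = _
            rw [if_pos hm]
          rw [hG, ← ih, isum_stepAt_le hs hm]
        · have hG : Gfun d (n + 1) m = Gfun d n (m + 2) := by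
            show Gfun d n (if m ≤ d n then m else m + 2) = _
            rw [if_neg hm]
          rw [hG, ← ih, isum_stepAt_ge hs m (by omega)]
    -- at a root step, the first two letters cancel
    have hz2 : ∀ n, d n = 0 → isum (t n) 2 = 0 := by
      intro n hn
      have hp := (hstep n).1
      rw [hn] at hp
      have : isum (t n) 2 = lval (t n 0) + lval (t n 1) := by
        simp [isum, Finset.sum_range_succ]
      rcases hp with ⟨h1, h2⟩ | ⟨h1, h2⟩ <;> simp [this, h1, h2, lval]
    -- pick an increasing sequence of root-step indices
    choose f hf1 hf2 using hroot
    set e : ℕ → ℕ := fun j => Nat.rec (f 0) (fun _ ej => f (ej + 1)) j with he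
    have he0 : d (e 0) = 0 := hf2 0
    have heS : ∀ j, e j + 1 ≤ e (j + 1) ∧ d (e (j + 1)) = 0 := fun j =>
      ⟨hf1 (e j + 1), hf2 (e j + 1)⟩
    have hero : ∀ j, d (e j) = 0 := by
      intro j
      cases j with
      | zero => exact he0
      | succ j => exact (heS j).2
    refine ⟨fun j => Nat.rec 0 (fun j' _ => Gfun d (e j') 2) j, ?_, rfl, ?_⟩
    · apply strictMono_nat_of_lt_succ
      intro j
      cases j with
      | zero => exact Gfun_two_pos d (e 0)
      | succ j =>
        show Gfun d (e j) 2 < Gfun d (e (j + 1)) 2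
        calc Gfun d (e j) 2 < Gfun d (e j + 1) 2 := Gfun_root d (e j) (hero j)
          _ ≤ Gfun d (e (j + 1)) 2 := Gfun_mono_n d 2 (heS j).1
    · intro j
      cases j with
      | zero => simp [isum]
      | succ j =>
        show isum w (Gfun d (e j) 2) = 0
        rw [← hisum (e j) 2]
        exact hz2 (e j) (hero j)
  · -- zero-word decomposition → root-active
    rintro ⟨b, hmono, hz0, hzero⟩
    set s0 : GState := ⟨w, b, hmono, hz0, hzero⟩ with hs0
    set S : ℕ → GState := fun n => GState.next^[n] s0 with hS
    have hSsucc : ∀ n, S (n + 1) = (S n).next := by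
      intro n
      show GState.next^[n + 1] s0 = _
      rw [Function.iterate_succ_apply']
    refine ⟨fun n => (S n).u, fun n => (S n).kk, rfl, ?_, ?_⟩
    · intro n
      have := (S n).step_next
      rw [← GState.next_u, ← hSsucc n] at this
      exact this
    · intro N
      by_contra h
      push_neg at h
      have key : ∀ m, (S (N + m)).b 1 + 2 * m ≤ (S N).b 1 := by
        intro m
        induction m with
        | zero => simp
        | succ m ih =>
          have hne : (S (N + m)).kk ≠ 0 := h (N + m) (by omega)
          obtain ⟨h1, h2⟩ := (S (N + m)).next_b1 hne
          rw [← hSsucc (N + m)] at h1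
          have : N + (m + 1) = (N + m) + 1 := by omega
          rw [this, h1]
          omega
      have h1 := key ((S N).b 1)
      have h2 := (S (N + (S N).b 1)).b1_pos'
      omega

end PS
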